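/- The $m = n = 1$ Cauchy identity for spin q-Whittaker polynomials: with $\mathbb{F}_i(x) = x^i \frac{(-s/x;q)_i}{(s^2;q)_i}$ and $\mathbb{F}^*_i(y) = y^i \frac{(-s/y;q)_i}{(q;q)_i}$ for $i \geq 1$, and $\mathbb{F}_0 = \mathbb{F}^*_0 = 1$, one has $\sum_{i=0}^{\infty} \mathbb{F}_i(x) \mathbb{F}^*_i(y) = \frac{(-sx;q)_\infty (-sy;q)_\infty}{(s^2;q)_\infty (xy;q)_\infty}$ for $|q|, |s|, |x|, |y| < 1$. -/

import Mathlib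

/-!
Write `F(x, y)` for the left-hand side. Termwise telescoping gives the q-difference equation
`(1 - xy) F(x, y) = (1 + sy) F(x, qy)`. Iterating it and letting `q^N y → 0` (the terms are
products of ratios tending to `xy`, which gives the domination needed for continuity of `F` in
`y`) yields `(xy;q)_∞ F(x, y) = (-sy;q)_∞ F(x, 0)`. As `F` is symmetric, the same identity with
`(0, x)` reduces everything to `F(0, 0) = ∑ s^{2n} q^{n(n-1)} / ((s²;q)_n (q;q)_n)`, and the
equation `(1 - c) H(c) = H(qc)` for `H(c) = ∑ c^n q^{n(n-1)} / ((c;q)_n (q;q)_n)` gives, in the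
same way, the Durfee rectangle identity `(c;q)_∞ H(c) = 1`, which also shows `(c;q)_∞ ≠ 0`.
-/

/-- The finite q-Pochhammer symbol `(a;q)_m = ∏_{i<m} (1 - a q^i)`. -/
noncomputable def qPoch (q a : ℂ) (m : ℕ) : ℂ := ∏ i ∈ Finset.range m, (1 - a * q ^ i)

/-- `xPoch q s x k = x^k (-s/x;q)_k = ∏_{j<k} (x + s q^j)`, interpreted polynomially. -/
noncomputable def xPoch (q s x : ℂ) (k : ℕ) : ℂ := ∏ j ∈ Finset.range k, (x + s * q ^ j)

open Filter Finset Topology Metric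

section General

theorem tsum_sub_succ_eq {E : Type*} [AddCommGroup E] [TopologicalSpace E]
    [IsTopologicalAddGroup E] [T2Space E] {v : ℕ → E} (hv : Summable v) :
    ∑' n, (v n - v (n + 1)) = v 0 := by
  have hsum : Summable fun n => v n - v (n + 1) := hv.sub ((summable_nat_add_iff 1).2 hv)
  refine (hsum.hasSum_iff_tendsto_nat.2 ?_).tsum_eq
  simpa using ((tendsto_const_nhds (x := v 0)).sub hv.tendsto_atTop_zero).congr
    fun n => (sum_range_sub' v n).symm

theorem summable_prod_range_of_tendsto {β : ℕ → ℝ} {L : ℝ} (hβ0 : ∀ j, 0 ≤ β j)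
    (hβ : Tendsto β atTop (𝓝 L)) (hL : L < 1) :
    Summable fun n => ∏ j ∈ range n, β j := by
  refine summable_of_ratio_norm_eventually_le (r := (L + 1) / 2) (by linarith) ?_
  filter_upwards [hβ.eventually_lt_const (show L < (L + 1) / 2 by linarith)] with n hn
  rw [prod_range_succ, norm_mul, Real.norm_of_nonneg (hβ0 n), mul_comm]
  exact mul_le_mul_of_nonneg_right hn.le (norm_nonneg _)

variable {𝕜 : Type*} [NormedField 𝕜]

theorem one_sub_norm_mul_pow_le_norm (a q : 𝕜) (j : ℕ) :
    1 - ‖a‖ * ‖q‖ ^ j ≤ ‖1 - a * q ^ j‖ := by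
  simpa [norm_mul, norm_pow] using norm_sub_norm_le (1 : 𝕜) (a * q ^ j)

theorem norm_mul_lt_one {a b : 𝕜} (ha : ‖a‖ < 1) (hb : ‖b‖ ≤ 1) : ‖a * b‖ < 1 := by
  rw [norm_mul]
  exact mul_lt_one_of_nonneg_of_lt_one_left (norm_nonneg a) ha hb

theorem norm_mul_norm_pow_lt_one {a q : 𝕜} (hq : ‖q‖ ≤ 1) (ha : ‖a‖ < 1) (j : ℕ) :
    ‖a‖ * ‖q‖ ^ j < 1 :=
  mul_lt_one_of_nonneg_of_lt_one_left (norm_nonneg a) ha (pow_le_one₀ (norm_nonneg q) hq)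

theorem one_sub_mul_pow_ne_zero {a q : 𝕜} (hq : ‖q‖ ≤ 1) (ha : ‖a‖ < 1) (j : ℕ) :
    1 - a * q ^ j ≠ 0 :=
  norm_pos_iff.1 <| (sub_pos.2 (norm_mul_norm_pow_lt_one hq ha j)).trans_le
    (one_sub_norm_mul_pow_le_norm a q j)

theorem summable_norm_prod_range_of_norm_le {ρ : ℕ → 𝕜} {β : ℕ → ℝ} {L : ℝ}
    (hρ : ∀ j, ‖ρ j‖ ≤ β j) (hβ : Tendsto β atTop (𝓝 L)) (hL : L < 1) :
    Summable fun n => ‖∏ j ∈ range n, ρ j‖ := by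
  refine Summable.of_nonneg_of_le (fun _ => norm_nonneg _) (fun n => ?_)
    (summable_prod_range_of_tendsto (fun j => (norm_nonneg _).trans (hρ j)) hβ hL)
  rw [norm_prod]
  exact prod_le_prod (fun _ _ => norm_nonneg _) fun j _ => hρ j

variable [CompleteSpace 𝕜]

theorem summable_pow_mul_of_summable_norm {q : 𝕜} (hq : ‖q‖ ≤ 1) {f : ℕ → 𝕜}
    (hf : Summable fun n => ‖f n‖) : Summable fun n => q ^ n * f n :=
  hf.of_norm_bounded fun n => by
    rw [norm_mul, norm_pow]
    exact mul_le_of_le_one_left (norm_nonneg _) (pow_le_one₀ (norm_nonneg q) hq)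

theorem continuousOn_tsum_prod_range {X : Type*} [TopologicalSpace X] {S : Set X}
    {ρ : ℕ → X → 𝕜} {β : ℕ → ℝ} {L : ℝ} (hcont : ∀ j, ContinuousOn (ρ j) S)
    (hβ0 : ∀ j, 0 ≤ β j) (hρ : ∀ j, ∀ w ∈ S, ‖ρ j w‖ ≤ β j) (hβ : Tendsto β atTop (𝓝 L))
    (hL : L < 1) :
    ContinuousOn (fun w => ∑' n, ∏ j ∈ range n, ρ j w) S := by
  refine continuousOn_tsum (fun n => continuousOn_finsetProd _ fun j _ => hcont j)
    (summable_prod_range_of_tendsto hβ0 hβ hL) fun n w hw => ?_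
  rw [norm_prod]
  exact prod_le_prod (fun _ _ => norm_nonneg _) fun j _ => hρ j w hw

theorem multipliable_one_sub_mul_pow {q : 𝕜} (hq : ‖q‖ < 1) (w : 𝕜) :
    Multipliable fun k : ℕ => 1 - w * q ^ k := by
  have hsum : Summable fun k : ℕ => ‖-(w * q ^ k)‖ := by
    simpa [norm_mul, norm_pow] using
      (summable_geometric_of_lt_one (norm_nonneg q) hq).mul_left ‖w‖
  simpa [sub_eq_add_neg] using multipliable_one_add_of_summable hsum

theorem tprod_mul_eq_of_functional_eq {G : 𝕜 → 𝕜} {q a b z : 𝕜} (hq : ‖q‖ < 1)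
    (hG : ContinuousOn G (closedBall 0 ‖z‖))
    (hfe : ∀ w, ‖w‖ ≤ ‖z‖ → (1 - a * w) * G w = (1 - b * w) * G (q * w)) :
    (∏' k, (1 - a * z * q ^ k)) * G z = (∏' k, (1 - b * z * q ^ k)) * G 0 := by
  have hzN (N : ℕ) : ‖q ^ N * z‖ ≤ ‖z‖ := by
    rw [norm_mul, norm_pow]
    exact mul_le_of_le_one_left (norm_nonneg z) (pow_le_one₀ (norm_nonneg q) hq.le)
  have hfinite (N : ℕ) : (∏ k ∈ range N, (1 - a * z * q ^ k)) * G z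
      = (∏ k ∈ range N, (1 - b * z * q ^ k)) * G (q ^ N * z) := by
    induction N with
    | zero => simp
    | succ N ih =>
      rw [prod_range_succ, prod_range_succ, show q ^ (N + 1) * z = q * (q ^ N * z) by ring]
      linear_combination (1 - a * z * q ^ N) * ih
        + (∏ k ∈ range N, (1 - b * z * q ^ k)) * hfe _ (hzN N)
  have hzero : Tendsto (fun N => q ^ N * z) atTop (𝓝[closedBall 0 ‖z‖] 0) :=
    tendsto_nhdsWithin_iff.2 ⟨by simpa using
      (tendsto_pow_atTop_nhds_zero_of_norm_lt_one hq).mul_const z,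
      Eventually.of_forall fun N => mem_closedBall_zero_iff.2 (hzN N)⟩
  have hG0 : ContinuousWithinAt G (closedBall 0 ‖z‖) 0 :=
    hG.continuousWithinAt (mem_closedBall_self (norm_nonneg z))
  exact tendsto_nhds_unique
    (((multipliable_one_sub_mul_pow hq _).hasProd.tendsto_prod_nat.mul_const (G z)).congr hfinite)
    ((multipliable_one_sub_mul_pow hq _).hasProd.tendsto_prod_nat.mul (hG0.tendsto.comp hzero))

end General

section Pochhammer

variable (q s a x y : ℂ) (n : ℕ)

theorem qPoch_succ : qPoch q a (n + 1) = qPoch q a n * (1 - a * q ^ n) := prod_range_succ _ _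

theorem xPoch_succ : xPoch q s x (n + 1) = xPoch q s x n * (x + s * q ^ n) := prod_range_succ _ _

theorem qPoch_succ' : qPoch q a (n + 1) = (1 - a) * qPoch q (q * a) n := by
  simp only [qPoch, prod_range_succ', pow_zero, mul_one]
  rw [mul_comm]
  congr 1
  exact prod_congr rfl fun j _ => by ring

theorem xPoch_mul_left_succ :
    xPoch q s (q * y) (n + 1) = (q * y + s) * q ^ n * xPoch q s y n := by
  simp only [xPoch, prod_range_succ', pow_zero, mul_one]
  rw [prod_congr rfl fun j _ => show q * y + s * q ^ (j + 1) = q * (y + s * q ^ j) by ring,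
    prod_mul_distrib, prod_const, card_range]
  ring

theorem qPoch_ne_zero {q a : ℂ} (hq : ‖q‖ ≤ 1) (ha : ‖a‖ < 1) (n : ℕ) : qPoch q a n ≠ 0 :=
  prod_ne_zero_iff.2 fun j _ => one_sub_mul_pow_ne_zero hq ha j

end Pochhammer

section Cauchy

noncomputable def cauchyTerm (q s x y : ℂ) (n : ℕ) : ℂ :=
  xPoch q s x n / qPoch q (s ^ 2) n * (xPoch q s y n / qPoch q q n)

noncomputable def cauchySum (q s x y : ℂ) : ℂ := ∑' n, cauchyTerm q s x y n

noncomputable def cauchyRatio (q s x y : ℂ) (j : ℕ) : ℂ :=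
  (x + s * q ^ j) * (y + s * q ^ j) / ((1 - s ^ 2 * q ^ j) * (1 - q ^ (j + 1)))

variable {q s x y w : ℂ} {r : ℝ}

@[simp]
theorem cauchyTerm_zero (q s x y : ℂ) : cauchyTerm q s x y 0 = 1 := by
  simp [cauchyTerm, xPoch, qPoch]

theorem cauchyTerm_succ (q s x y : ℂ) (n : ℕ) :
    cauchyTerm q s x y (n + 1) = cauchyTerm q s x y n * cauchyRatio q s x y n := by
  simp only [cauchyTerm, cauchyRatio, xPoch_succ, qPoch_succ, ← pow_succ', div_eq_mul_inv,
    mul_inv]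
  ring

theorem cauchyTerm_eq_prod (q s x y : ℂ) (n : ℕ) :
    cauchyTerm q s x y n = ∏ j ∈ range n, cauchyRatio q s x y j :=
  (prod_range_induction _ _ (cauchyTerm_zero q s x y) n
    fun k _ => cauchyTerm_succ q s x y k).symm

theorem cauchyTerm_mul_left_succ (q s x y : ℂ) (n : ℕ) :
    cauchyTerm q s x (q * y) (n + 1) = cauchyTerm q s x y n *
      ((x + s * q ^ n) * ((q * y + s) * q ^ n) / ((1 - s ^ 2 * q ^ n) * (1 - q ^ (n + 1)))) := by
  rw [cauchyTerm, xPoch_mul_left_succ]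
  simp only [cauchyTerm, xPoch_succ, qPoch_succ, ← pow_succ', div_eq_mul_inv, mul_inv]
  ring

theorem cauchySum_comm (q s x y : ℂ) : cauchySum q s x y = cauchySum q s y x :=
  tsum_congr fun n => by simp only [cauchyTerm, div_mul_div_comm, mul_comm]

theorem norm_cauchyRatio_le (hq : ‖q‖ < 1) (hs : ‖s‖ < 1) (hw : ‖w‖ ≤ r) (j : ℕ) :
    ‖cauchyRatio q s x w j‖ ≤ (‖x‖ + ‖s‖ * ‖q‖ ^ j) * (r + ‖s‖ * ‖q‖ ^ j) /
      ((1 - ‖s‖ ^ 2 * ‖q‖ ^ j) * (1 - ‖q‖ * ‖q‖ ^ j)) := by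
  have hs2 : ‖s ^ 2‖ < 1 := sq s ▸ norm_mul_lt_one hs hs.le
  have hnum (z : ℂ) : ‖z + s * q ^ j‖ ≤ ‖z‖ + ‖s‖ * ‖q‖ ^ j :=
    (norm_add_le _ _).trans_eq (by rw [norm_mul, norm_pow])
  have hden₁ : 1 - ‖s‖ ^ 2 * ‖q‖ ^ j ≤ ‖1 - s ^ 2 * q ^ j‖ := by
    rw [← norm_pow]
    exact one_sub_norm_mul_pow_le_norm (s ^ 2) q j
  have hden₂ : 1 - ‖q‖ * ‖q‖ ^ j ≤ ‖1 - q ^ (j + 1)‖ := by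
    simpa [pow_succ'] using one_sub_norm_mul_pow_le_norm q q j
  have hpos₁ : 0 < 1 - ‖s‖ ^ 2 * ‖q‖ ^ j := by
    simpa [norm_pow] using sub_pos.2 (norm_mul_norm_pow_lt_one hq.le hs2 j)
  have hpos₂ : 0 < 1 - ‖q‖ * ‖q‖ ^ j := sub_pos.2 (norm_mul_norm_pow_lt_one hq.le hq j)
  rw [cauchyRatio, norm_div, norm_mul, norm_mul]
  gcongr
  · exact mul_nonneg (by positivity) (add_nonneg ((norm_nonneg w).trans hw) (by positivity))
  · exact hnum x
  · exact (hnum w).trans (by gcongr)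

theorem tendsto_cauchyRatio_bound (hq : ‖q‖ < 1) (s x : ℂ) (r : ℝ) :
    Tendsto (fun j : ℕ => (‖x‖ + ‖s‖ * ‖q‖ ^ j) * (r + ‖s‖ * ‖q‖ ^ j) /
      ((1 - ‖s‖ ^ 2 * ‖q‖ ^ j) * (1 - ‖q‖ * ‖q‖ ^ j))) atTop (𝓝 (‖x‖ * r)) := by
  have hφ : ContinuousAt (fun t : ℝ => (‖x‖ + ‖s‖ * t) * (r + ‖s‖ * t) /
      ((1 - ‖s‖ ^ 2 * t) * (1 - ‖q‖ * t))) 0 := by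
    fun_prop (disch := norm_num)
  simpa [Function.comp_def] using
    hφ.tendsto.comp (tendsto_pow_atTop_nhds_zero_of_lt_one (norm_nonneg q) hq)


theorem summable_norm_cauchyTerm (hq : ‖q‖ < 1) (hs : ‖s‖ < 1) (hx : ‖x‖ < 1) (hy : ‖y‖ < 1) :
    Summable fun n => ‖cauchyTerm q s x y n‖ := by
  simpa only [cauchyTerm_eq_prod] using
    summable_norm_prod_range_of_norm_le (norm_cauchyRatio_le hq hs le_rfl)
      (tendsto_cauchyRatio_bound hq s x ‖y‖)
      (mul_lt_one_of_nonneg_of_lt_one_left (norm_nonneg x) hx hy.le)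

theorem continuousOn_cauchySum (hq : ‖q‖ < 1) (hs : ‖s‖ < 1) (hx : ‖x‖ < 1) (hy : ‖y‖ < 1) :
    ContinuousOn (cauchySum q s x) (closedBall 0 ‖y‖) := by
  have hprod : cauchySum q s x = fun w => ∑' n, ∏ j ∈ range n, cauchyRatio q s x w j :=
    funext fun w => tsum_congr (cauchyTerm_eq_prod q s x w)
  rw [hprod]
  refine continuousOn_tsum_prod_range (fun j => by unfold cauchyRatio; fun_prop)
    (fun j => (norm_nonneg _).trans (norm_cauchyRatio_le hq hs le_rfl j))
    (fun j w hw => norm_cauchyRatio_le hq hs (by simpa using hw) j)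
    (tendsto_cauchyRatio_bound hq s x ‖y‖)
    (mul_lt_one_of_nonneg_of_lt_one_left (norm_nonneg x) hx hy.le)

theorem one_sub_mul_mul_cauchySum (hq : ‖q‖ < 1) (hs : ‖s‖ < 1) (hx : ‖x‖ < 1)
    (hy : ‖y‖ < 1) : (1 - x * y) * cauchySum q s x y = (1 + s * y) * cauchySum q s x (q * y) := by
  have hqy : ‖q * y‖ < 1 := norm_mul_lt_one hq hy.le
  have hS := summable_norm_cauchyTerm hq hs hx hy
  have hS' := (summable_norm_cauchyTerm hq hs hx hqy).of_norm
  set v : ℕ → ℂ := fun n => cauchyTerm q s x y n * (1 + s * y * q ^ n) with hv_def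
  have hv : Summable v := (hS.of_norm.add
    ((summable_pow_mul_of_summable_norm hq.le hS).mul_left (s * y))).congr fun n => by ring
  have htelescope (n : ℕ) :
      (1 - x * y) * cauchyTerm q s x y n - (1 + s * y) * cauchyTerm q s x (q * y) (n + 1)
        = v n - v (n + 1) := by
    have h₁ := one_sub_mul_pow_ne_zero hq.le (sq s ▸ norm_mul_lt_one hs hs.le) n
    have h₂ : 1 - q ^ (n + 1) ≠ 0 := by
      simpa [pow_succ'] using one_sub_mul_pow_ne_zero hq.le hq n
    rw [cauchyTerm_mul_left_succ, hv_def]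
    simp only [cauchyTerm_succ, cauchyRatio]
    field_simp
    ring
  have hsum : ∑' n, ((1 - x * y) * cauchyTerm q s x y n
      - (1 + s * y) * cauchyTerm q s x (q * y) (n + 1)) = 1 + s * y := by
    rw [tsum_congr htelescope, tsum_sub_succ_eq hv, hv_def]
    simp
  rw [Summable.tsum_sub (hS.of_norm.mul_left _) (((summable_nat_add_iff 1).2 hS').mul_left _),
    tsum_mul_left, tsum_mul_left] at hsum
  rw [cauchySum, cauchySum, hS'.tsum_eq_zero_add, cauchyTerm_zero]
  linear_combination hsum

end Cauchy

section Durfee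

noncomputable def durfeeTerm (q c : ℂ) (n : ℕ) : ℂ :=
  c ^ n * q ^ (n * (n - 1)) / (qPoch q c n * qPoch q q n)

noncomputable def durfeeSum (q c : ℂ) : ℂ := ∑' n, durfeeTerm q c n

noncomputable def durfeeRatio (q c : ℂ) (j : ℕ) : ℂ :=
  c * q ^ (2 * j) / ((1 - c * q ^ j) * (1 - q ^ (j + 1)))

variable {q c w : ℂ} {r : ℝ}

@[simp]
theorem durfeeTerm_zero (q c : ℂ) : durfeeTerm q c 0 = 1 := by
  simp [durfeeTerm, qPoch]

theorem durfeeTerm_succ (q c : ℂ) (n : ℕ) :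
    durfeeTerm q c (n + 1) = durfeeTerm q c n * durfeeRatio q c n := by
  have hexp : (n + 1) * (n + 1 - 1) = n * (n - 1) + 2 * n := by
    cases n <;> simp; ring
  simp only [durfeeTerm, durfeeRatio, hexp, pow_add, pow_succ, qPoch_succ, ← pow_succ',
    div_eq_mul_inv, mul_inv]
  ring

theorem durfeeTerm_eq_prod (q c : ℂ) (n : ℕ) :
    durfeeTerm q c n = ∏ j ∈ range n, durfeeRatio q c j :=
  (prod_range_induction _ _ (durfeeTerm_zero q c) n fun k _ => durfeeTerm_succ q c k).symm

theorem durfeeTerm_mul_left (hq : ‖q‖ < 1) (hc : ‖c‖ < 1) (n : ℕ) :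
    durfeeTerm q (q * c) n * (1 - c * q ^ n) = (1 - c) * q ^ n * durfeeTerm q c n := by
  have hqc : ‖q * c‖ < 1 := norm_mul_lt_one hq hc.le
  have hshift : (1 - c) * qPoch q (q * c) n = qPoch q c n * (1 - c * q ^ n) :=
    (qPoch_succ' q c n).symm.trans (qPoch_succ q c n)
  have h₁ := qPoch_ne_zero hq.le hqc n
  have h₂ := qPoch_ne_zero hq.le hc n
  have h₃ := qPoch_ne_zero hq.le hq n
  simp only [durfeeTerm, mul_pow]
  field_simp
  linear_combination -(q ^ n * c ^ n * q ^ (n * (n - 1))) * hshift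


theorem norm_durfeeRatio_le (hq : ‖q‖ < 1) (hr : r < 1) (hw : ‖w‖ ≤ r) (j : ℕ) :
    ‖durfeeRatio q w j‖ ≤ r * (‖q‖ ^ j) ^ 2 / ((1 - r * ‖q‖ ^ j) * (1 - ‖q‖ * ‖q‖ ^ j)) := by
  have hq' : ‖q‖ ^ j ≤ 1 := pow_le_one₀ (norm_nonneg q) hq.le
  have hden₁ : 1 - r * ‖q‖ ^ j ≤ ‖1 - w * q ^ j‖ :=
    (sub_le_sub_left (by gcongr) 1).trans (one_sub_norm_mul_pow_le_norm w q j)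
  have hden₂ : 1 - ‖q‖ * ‖q‖ ^ j ≤ ‖1 - q ^ (j + 1)‖ := by
    simpa [pow_succ'] using one_sub_norm_mul_pow_le_norm q q j
  have hpos₁ : 0 < 1 - r * ‖q‖ ^ j := by nlinarith [norm_nonneg q, norm_nonneg w]
  have hpos₂ : 0 < 1 - ‖q‖ * ‖q‖ ^ j := sub_pos.2 (norm_mul_norm_pow_lt_one hq.le hq j)
  rw [durfeeRatio, norm_div, norm_mul, norm_mul, norm_pow, pow_mul']
  gcongr
  exact mul_nonneg ((norm_nonneg w).trans hw) (by positivity)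

theorem tendsto_durfeeRatio_bound (hq : ‖q‖ < 1) (r : ℝ) :
    Tendsto (fun j : ℕ => r * (‖q‖ ^ j) ^ 2 / ((1 - r * ‖q‖ ^ j) * (1 - ‖q‖ * ‖q‖ ^ j)))
      atTop (𝓝 0) := by
  have hφ : ContinuousAt (fun t : ℝ => r * t ^ 2 / ((1 - r * t) * (1 - ‖q‖ * t))) 0 := by
    fun_prop (disch := norm_num)
  simpa [Function.comp_def] using
    hφ.tendsto.comp (tendsto_pow_atTop_nhds_zero_of_lt_one (norm_nonneg q) hq)

theorem summable_norm_durfeeTerm (hq : ‖q‖ < 1) (hc : ‖c‖ < 1) :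
    Summable fun n => ‖durfeeTerm q c n‖ := by
  simpa only [durfeeTerm_eq_prod] using
    summable_norm_prod_range_of_norm_le (norm_durfeeRatio_le hq hc le_rfl)
      (tendsto_durfeeRatio_bound hq ‖c‖) zero_lt_one

theorem continuousOn_durfeeSum (hq : ‖q‖ < 1) (hc : ‖c‖ < 1) :
    ContinuousOn (durfeeSum q) (closedBall 0 ‖c‖) := by
  have hprod : durfeeSum q = fun w => ∑' n, ∏ j ∈ range n, durfeeRatio q w j :=
    funext fun w => tsum_congr (durfeeTerm_eq_prod q w)
  have hne (j : ℕ) : ∀ w ∈ closedBall (0 : ℂ) ‖c‖, (1 - w * q ^ j) * (1 - q ^ (j + 1)) ≠ 0 :=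
    fun w hw => mul_ne_zero
      (one_sub_mul_pow_ne_zero hq.le ((mem_closedBall_zero_iff.1 hw).trans_lt hc) j)
      (by simpa [pow_succ'] using one_sub_mul_pow_ne_zero hq.le hq j)
  rw [hprod]
  exact continuousOn_tsum_prod_range
    (fun j => ContinuousOn.div (by fun_prop) (by fun_prop) (hne j))
    (fun j => (norm_nonneg _).trans (norm_durfeeRatio_le hq hc le_rfl j))
    (fun j w hw => norm_durfeeRatio_le hq hc (mem_closedBall_zero_iff.1 hw) j)
    (tendsto_durfeeRatio_bound hq ‖c‖) zero_lt_one

theorem one_sub_mul_durfeeSum (hq : ‖q‖ < 1) (hc : ‖c‖ < 1) :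
    (1 - c) * durfeeSum q c = durfeeSum q (q * c) := by
  have hqc : ‖q * c‖ < 1 := norm_mul_lt_one hq hc.le
  have hS := summable_norm_durfeeTerm hq hc
  have hS' := (summable_norm_durfeeTerm hq hqc).of_norm
  set v : ℕ → ℂ := fun n => durfeeTerm q c n * (1 - q ^ n) with hv_def
  have hv : Summable v :=
    (hS.of_norm.sub (summable_pow_mul_of_summable_norm hq.le hS)).congr fun n => by ring
  have htelescope (n : ℕ) :
      (1 - c) * durfeeTerm q c n - durfeeTerm q (q * c) n = (1 - c) * (v n - v (n + 1)) := by
    have h₁ := one_sub_mul_pow_ne_zero hq.le hc n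
    have h₂ : 1 - q ^ (n + 1) ≠ 0 := by
      simpa [pow_succ'] using one_sub_mul_pow_ne_zero hq.le hq n
    rw [eq_div_of_mul_eq h₁ (durfeeTerm_mul_left hq hc n), hv_def]
    simp only [durfeeTerm_succ, durfeeRatio]
    field_simp
    ring
  have hsum : ∑' n, ((1 - c) * durfeeTerm q c n - durfeeTerm q (q * c) n) = 0 := by
    rw [tsum_congr htelescope, tsum_mul_left, tsum_sub_succ_eq hv, hv_def]
    simp
  rw [Summable.tsum_sub (hS.of_norm.mul_left _) hS', tsum_mul_left] at hsum
  exact sub_eq_zero.1 hsum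

theorem durfeeSum_zero (q : ℂ) : durfeeSum q 0 = 1 := by
  rw [durfeeSum, tsum_eq_single 0 fun n hn => by simp [durfeeTerm, zero_pow hn]]
  exact durfeeTerm_zero q 0

theorem tprod_mul_durfeeSum (hq : ‖q‖ < 1) (hc : ‖c‖ < 1) :
    (∏' k, (1 - c * q ^ k)) * durfeeSum q c = 1 := by
  have h := tprod_mul_eq_of_functional_eq (a := 1) (b := 0) hq (continuousOn_durfeeSum hq hc)
    fun w hw => by simpa using one_sub_mul_durfeeSum hq (hw.trans_lt hc)
  simpa [durfeeSum_zero] using h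

theorem tprod_one_sub_mul_pow_ne_zero (hq : ‖q‖ < 1) (hc : ‖c‖ < 1) :
    ∏' k, (1 - c * q ^ k) ≠ 0 :=
  left_ne_zero_of_mul_eq_one (tprod_mul_durfeeSum hq hc)

end Durfee

theorem cauchySum_zero_zero (q s : ℂ) : cauchySum q s 0 0 = durfeeSum q (s ^ 2) :=
  tsum_congr fun n => by
    rw [cauchyTerm_eq_prod, durfeeTerm_eq_prod]
    exact prod_congr rfl fun j _ => by simp only [cauchyRatio, durfeeRatio, zero_add]; ring

theorem tprod_mul_cauchySum {q s x y : ℂ} (hq : ‖q‖ < 1) (hs : ‖s‖ < 1) (hx : ‖x‖ < 1)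
    (hy : ‖y‖ < 1) : (∏' k, (1 - x * y * q ^ k)) * cauchySum q s x y
      = (∏' k, (1 - -s * y * q ^ k)) * cauchySum q s x 0 :=
  tprod_mul_eq_of_functional_eq hq (continuousOn_cauchySum hq hs hx hy) fun w hw => by
    rw [neg_mul, sub_neg_eq_add]
    exact one_sub_mul_mul_cauchySum hq hs hx (hw.trans_lt hy)

/-- The `m = n = 1` Cauchy identity for spin q-Whittaker polynomials:
`∑_{i≥0} 𝔽_i(x) 𝔽*_i(y) = (-sx;q)_∞ (-sy;q)_∞ / ((s²;q)_∞ (xy;q)_∞)`,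
where `𝔽_i(x) = x^i (-s/x;q)_i/(s²;q)_i` and `𝔽*_i(y) = y^i (-s/y;q)_i/(q;q)_i`. -/
theorem stmt6 (q s x y : ℂ) (hq : ‖q‖ < 1) (hs : ‖s‖ < 1) (hx : ‖x‖ < 1) (hy : ‖y‖ < 1) :
    ∑' i : ℕ, (xPoch q s x i / qPoch q (s ^ 2) i) * (xPoch q s y i / qPoch q q i)
      = (∏' k : ℕ, (1 - (-s * x) * q ^ k)) * (∏' k : ℕ, (1 - (-s * y) * q ^ k)) /
        ((∏' k : ℕ, (1 - s ^ 2 * q ^ k)) * ∏' k : ℕ, (1 - x * y * q ^ k)) := by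
  have hxy : ‖x * y‖ < 1 := norm_mul_lt_one hx hy.le
  have hs2 : ‖s ^ 2‖ < 1 := sq s ▸ norm_mul_lt_one hs hs.le
  have hxy_eq := tprod_mul_cauchySum hq hs hx hy
  have h0x_eq := tprod_mul_cauchySum hq hs (norm_zero.trans_lt one_pos) hx
  have hdurfee := tprod_mul_durfeeSum hq hs2
  rw [cauchySum_comm q s x 0] at hxy_eq
  simp only [zero_mul, sub_zero, tprod_one, one_mul, cauchySum_zero_zero] at h0x_eq
  set Psx := ∏' k : ℕ, (1 - -s * x * q ^ k)
  set Psy := ∏' k : ℕ, (1 - -s * y * q ^ k)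
  set Ps2 := ∏' k : ℕ, (1 - s ^ 2 * q ^ k)
  set Pxy := ∏' k : ℕ, (1 - x * y * q ^ k)
  show cauchySum q s x y = _
  rw [eq_div_iff (mul_ne_zero (tprod_one_sub_mul_pow_ne_zero hq hs2)
    (tprod_one_sub_mul_pow_ne_zero hq hxy))]
  linear_combination Ps2 * hxy_eq + Ps2 * Psy * h0x_eq + Psx * Psy * hdurfee
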